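/- arXiv:2104.07136 — 2 statements merged into one kernel-verified Lean document; each statement's English description precedes it below -/
import Mathlib

section
/- Let d ≥ 2, let L > 0, and let A ⊆ ℝ^{d-1} be a finite set contained in the closed ℓ∞-ball of radius L/2 centered at the origin and shattered by the family 𝓓_{d-1}^0 of closed degenerate balls in ℓ∞^{d-1} containing the origin. Then the set A' = {(a, 0) : a ∈ A} ∪ {(0, …, 0, L), (0, …, 0, -L)} ⊆ ℝ^d is shattered by the family 𝓒_d of closed balls in ℓ∞^d. Consequently VC-dim(𝓒_d) ≥ VC-dim(𝓓_{d-1}^0) + 2. -/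
open Set Metric

/-- A family `E` of subsets of `X` shatters a set `σ` if every subset of `σ`
is carved out by some member of `E`. -/
def Shatters {X : Type*} (E : Set (Set X)) (σ : Set X) : Prop :=
  ∀ T ⊆ σ, ∃ C ∈ E, C ∩ σ = T

/-- Vapnik–Chervonenkis dimension: supremum of cardinalities of finite shattered sets. -/
noncomputable def vcDim {X : Type*} (E : Set (Set X)) : ℕ∞ :=
  ⨆ (σ : Finset X) (_ : Shatters E ↑σ), (σ.card : ℕ∞)

/-- The family of all closed balls in `ℓ∞^d` (sup-norm balls = axis-parallel cubes,
including singletons as balls of radius 0). -/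
def Cd (d : ℕ) : Set (Set (Fin d → ℝ)) :=
  {C | ∃ x : Fin d → ℝ, ∃ r : ℝ, 0 ≤ r ∧ C = Metric.closedBall x r}

/-- A closed degenerate ball in `ℓ∞^d`: a product of closed intervals, each of which is
unbounded on at least one side, i.e. of the form `(-∞, b]`, `[a, ∞)` or all of `ℝ`. -/
def IsDegBall {d : ℕ} (C : Set (Fin d → ℝ)) : Prop :=
  ∃ I : Fin d → Set ℝ,
    (∀ i, (∃ b, I i = Set.Iic b) ∨ (∃ a, I i = Set.Ici a) ∨ I i = Set.univ) ∧
    C = {x | ∀ i, x i ∈ I i}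

/-- The family of all closed degenerate balls in `ℓ∞^d`. -/
def Dd (d : ℕ) : Set (Set (Fin d → ℝ)) := {C | IsDegBall C}

/-- The family of closed degenerate balls in `ℓ∞^d` containing the set `F`. -/
def DdF (d : ℕ) (F : Set (Fin d → ℝ)) : Set (Set (Fin d → ℝ)) :=
  {C | IsDegBall C ∧ F ⊆ C}

/-- The family of closed degenerate balls in `ℓ∞^d` containing the origin. -/
def Dd0 (d : ℕ) : Set (Set (Fin d → ℝ)) := DdF d {0}

/-- `padLast x r : ℝ^d` is the point whose first `d-1` coordinates are those of `x`
and whose last coordinate is `r`. -/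
def padLast {d : ℕ} (x : Fin (d - 1) → ℝ) (r : ℝ) : Fin d → ℝ :=
  fun i => if h : (i : ℕ) < d - 1 then x ⟨i, h⟩ else r

/-!
On the box `[-L/2, L/2]^(d-1)` every degenerate ball agrees with an `ℓ∞`-ball of any radius
`R ≥ L/2`: a bounded side `(-∞, b]` becomes a ball edge at `min b (L/2)`, and the opposite edge,
`2R ≥ L` further away, falls outside the box. In the last coordinate an interval `[l, u]` with
`l ∈ {-L, -L/2}` and `u ∈ {L/2, L}` contains `0` and contains `±L` exactly as prescribed, and its
radius is at least `L/2`. The product of the two is an `ℓ∞`-ball in `ℝ^d` cutting out any given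
subset of `{(a, 0) : a ∈ A} ∪ {(0, L), (0, -L)}`.
-/

section Shatters

variable {X : Type*} {E : Set (Set X)}

lemma shatters_iff_forall_mem_iff {σ : Set X} :
    Shatters E σ ↔ ∀ T ⊆ σ, ∃ C ∈ E, ∀ p ∈ σ, p ∈ C ↔ p ∈ T := by
  refine forall₂_congr fun T hT => exists_congr fun C => and_congr_right fun _ => ?_
  constructor
  · rintro rfl p hp
    simp [hp]
  · intro h
    ext p
    exact ⟨fun hp => (h p hp.2).1 hp.1, fun hp => ⟨(h p (hT hp)).2 hp, hT hp⟩⟩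

lemma shatters_empty (hE : E.Nonempty) : Shatters E ∅ := by
  intro T hT
  obtain ⟨C, hC⟩ := hE
  exact ⟨C, hC, by rw [inter_empty, subset_empty_iff.mp hT]⟩

lemma card_le_vcDim {σ : Finset X} (h : Shatters E σ) :
    (σ.card : ℕ∞) ≤ vcDim E :=
  le_iSup₂_of_le σ h le_rfl

lemma vcDim_add_le {Y : Type*} {F : Set (Set Y)} {k : ℕ∞}
    (hE : E.Nonempty) (h : ∀ σ : Finset X, Shatters E σ → σ.card + k ≤ vcDim F) :
    vcDim E + k ≤ vcDim F := by
  rw [vcDim, ENat.iSup_add]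
  refine iSup_le fun σ => ?_
  by_cases hσ : Shatters E σ
  · simpa [iSup_pos hσ] using h σ hσ
  · simpa [iSup_neg hσ] using h ∅ (by simpa using shatters_empty hE)

end Shatters

lemma exists_closedBall_inter_eq_of_interval {I : Set ℝ}
    (hI : (∃ b, I = Iic b) ∨ (∃ a, I = Ici a) ∨ I = univ) {L R : ℝ} (hLR : L ≤ R) :
    ∃ c, closedBall c R ∩ closedBall 0 L = I ∩ closedBall 0 L := by
  simp only [Real.closedBall_eq_Icc, zero_sub, zero_add]
  rcases hI with ⟨b, rfl⟩ | ⟨a, rfl⟩ | rfl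
  · exact ⟨min b L - R, Set.ext fun t => by grind⟩
  · exact ⟨max a (-L) + R, Set.ext fun t => by grind⟩
  · exact ⟨0, Set.ext fun t => by grind⟩

lemma IsDegBall.exists_closedBall_inter_eq {n : ℕ} {C : Set (Fin n → ℝ)} (hC : IsDegBall C)
    {L R : ℝ} (hL : 0 ≤ L) (hLR : L ≤ R) :
    ∃ c, closedBall c R ∩ closedBall 0 L = C ∩ closedBall 0 L := by
  obtain ⟨I, hI, rfl⟩ := hC
  choose c hc using fun i => exists_closedBall_inter_eq_of_interval (hI i) hLR
  refine ⟨c, Set.ext fun x => ?_⟩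
  have hR : 0 ≤ R := hL.trans hLR
  simp only [mem_inter_iff, mem_closedBall, dist_pi_le_iff hR, dist_pi_le_iff hL, mem_ofPred_eq,
    ← forall_and]
  refine forall_congr' fun i => ?_
  simpa [Real.dist_eq] using Set.ext_iff.mp (hc i) (x i)

lemma isDegBall_univ {n : ℕ} : IsDegBall (univ : Set (Fin n → ℝ)) :=
  ⟨fun _ => univ, fun _ => Or.inr (Or.inr rfl), by simp⟩

section padLast

variable {d : ℕ}

lemma padLast_apply_of_lt (x : Fin (d - 1) → ℝ) (r : ℝ) {j : Fin d} (h : (j : ℕ) < d - 1) :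
    padLast x r j = x ⟨j, h⟩ := dif_pos h

lemma padLast_apply_of_not_lt (x : Fin (d - 1) → ℝ) (r : ℝ) {j : Fin d}
    (h : ¬ (j : ℕ) < d - 1) : padLast x r j = r := dif_neg h

lemma padLast_apply_castLE (x : Fin (d - 1) → ℝ) (r : ℝ) (i : Fin (d - 1)) :
    padLast x r (Fin.castLE (Nat.sub_le d 1) i) = x i :=
  padLast_apply_of_lt x r i.isLt

lemma padLast_apply_last (hd : d ≠ 0) (x : Fin (d - 1) → ℝ) (r : ℝ) :
    padLast x r ⟨d - 1, by omega⟩ = r :=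
  padLast_apply_of_not_lt x r (lt_irrefl _)

lemma padLast_inj (hd : d ≠ 0) {x y : Fin (d - 1) → ℝ} {r s : ℝ} :
    padLast x r = padLast y s ↔ x = y ∧ r = s := by
  refine ⟨fun h => ⟨funext fun i => ?_, ?_⟩, fun h => h.1 ▸ h.2 ▸ rfl⟩
  · simpa only [padLast_apply_castLE] using congrFun h (Fin.castLE (Nat.sub_le d 1) i)
  · simpa only [padLast_apply_last hd] using congrFun h ⟨d - 1, by omega⟩

lemma padLast_mem_closedBall_iff (hd : d ≠ 0) {x c : Fin (d - 1) → ℝ} {r m R : ℝ}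
    (hR : 0 ≤ R) :
    padLast x r ∈ closedBall (padLast c m) R ↔ x ∈ closedBall c R ∧ r ∈ closedBall m R := by
  simp only [mem_closedBall, dist_pi_le_iff hR]
  refine ⟨fun h => ⟨fun i => ?_, ?_⟩, fun h j => ?_⟩
  · simpa only [padLast_apply_castLE] using h (Fin.castLE (Nat.sub_le d 1) i)
  · simpa only [padLast_apply_last hd] using h ⟨d - 1, by omega⟩
  · by_cases hj : (j : ℕ) < d - 1
    · simpa only [padLast_apply_of_lt _ _ hj] using h.1 ⟨j, hj⟩
    · simpa only [padLast_apply_of_not_lt _ _ hj] using h.2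

end padLast

lemma exists_closedBall_zero_mem_and_mem_iff {L : ℝ} (hL : 0 < L) (P Q : Prop) :
    ∃ m R, L / 2 ≤ R ∧ (0 : ℝ) ∈ closedBall m R ∧
      (L ∈ closedBall m R ↔ P) ∧ (-L ∈ closedBall m R ↔ Q) := by
  obtain ⟨u, hu, huP⟩ : ∃ u, L / 2 ≤ u ∧ (L ≤ u ↔ P) := by
    by_cases hP : P
    · exact ⟨L, by linarith, by simpa using hP⟩
    · exact ⟨L / 2, le_rfl, by simpa [hP] using half_lt_self hL⟩
  obtain ⟨l, hl, hlQ⟩ : ∃ l, l ≤ -L / 2 ∧ (l ≤ -L ↔ Q) := by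
    by_cases hQ : Q
    · exact ⟨-L, by linarith, by simpa using hQ⟩
    · exact ⟨-L / 2, le_rfl, by simp [hQ]; linarith⟩
  refine ⟨(u + l) / 2, (u - l) / 2, by linarith, ?_⟩
  simp only [Real.closedBall_eq_Icc, mem_Icc]
  grind

lemma shatters_Cd_padLast_union {d : ℕ} (hd : d ≠ 0) {L : ℝ} (hL : 0 < L)
    {A : Set (Fin (d - 1) → ℝ)} (hA : A ⊆ closedBall 0 (L / 2))
    (hshat : Shatters (Dd0 (d - 1)) A) :
    Shatters (Cd d) ((fun a => padLast a 0) '' A ∪ {padLast 0 L, padLast 0 (-L)}) := by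
  rw [shatters_iff_forall_mem_iff] at hshat ⊢
  intro T hT
  obtain ⟨C, ⟨hC, h0C⟩, hCA⟩ := hshat {a ∈ A | padLast a 0 ∈ T} (sep_subset _ _)
  obtain ⟨m, R, hLR, h0, hpos, hneg⟩ :=
    exists_closedBall_zero_mem_and_mem_iff hL (padLast 0 L ∈ T) (padLast 0 (-L) ∈ T)
  obtain ⟨c, hc⟩ := hC.exists_closedBall_inter_eq (by positivity) hLR
  have hR : 0 ≤ R := by linarith
  have hcube : ∀ x ∈ closedBall 0 (L / 2), x ∈ closedBall c R ↔ x ∈ C := fun x hx => by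
    simpa [hx] using Set.ext_iff.mp hc x
  have h0cube : (0 : Fin (d - 1) → ℝ) ∈ closedBall c R :=
    (hcube 0 (mem_closedBall_self (by positivity))).2 (h0C rfl)
  refine ⟨closedBall (padLast c m) R, ⟨_, R, hR, rfl⟩, ?_⟩
  rintro p (⟨a, ha, rfl⟩ | rfl | rfl) <;> rw [padLast_mem_closedBall_iff hd hR]
  · simp [hcube a (hA ha), hCA a ha, ha, h0]
  · simp [h0cube, hpos]
  · simp [h0cube, hneg]

lemma card_image_padLast_union_pair {d : ℕ} (hd : d ≠ 0) {L : ℝ} (hL : L ≠ 0)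
    (σ : Finset (Fin (d - 1) → ℝ)) :
    (σ.image (fun a => padLast a 0) ∪ {padLast 0 L, padLast 0 (-L)}).card = σ.card + 2 := by
  have hdisj : Disjoint (σ.image (fun a => padLast a 0)) {padLast 0 L, padLast 0 (-L)} := by
    rw [Finset.disjoint_left]
    rintro _ ha
    obtain ⟨a, -, rfl⟩ := Finset.mem_image.mp ha
    simp [padLast_inj hd, hL.symm, zero_eq_neg, hL]
  rw [Finset.card_union_of_disjoint hdisj,
    Finset.card_image_of_injective _ fun x y h => ((padLast_inj hd).1 h).1,
    Finset.card_pair (by simp [padLast_inj hd, self_eq_neg, hL])]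

/-- If `A ⊆ ℝ^{d-1}` lies in the closed `ℓ∞`-ball of radius `L/2` about the origin and is
shattered by `Dd0 (d-1)`, then `{(a,0) : a ∈ A} ∪ {(0,…,0,L), (0,…,0,-L)} ⊆ ℝ^d` is
shattered by `Cd d`; consequently `vcDim (Cd d) ≥ vcDim (Dd0 (d-1)) + 2`. -/
theorem vcDim_Cd_ge_vcDim_Dd0_add_two (d : ℕ) (hd : 2 ≤ d) :
    (∀ L : ℝ, 0 < L → ∀ A : Finset (Fin (d - 1) → ℝ),
      (↑A : Set (Fin (d - 1) → ℝ)) ⊆ Metric.closedBall 0 (L / 2) →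
      Shatters (Dd0 (d - 1)) ↑A →
      Shatters (Cd d)
        ((fun a : Fin (d - 1) → ℝ => padLast a 0) '' ↑A ∪
          {padLast (0 : Fin (d - 1) → ℝ) L, padLast (0 : Fin (d - 1) → ℝ) (-L)})) ∧
      vcDim (Dd0 (d - 1)) + 2 ≤ vcDim (Cd d) := by
  have hd0 : d ≠ 0 := by omega
  refine ⟨fun L hL A hA hshat => shatters_Cd_padLast_union hd0 hL hA hshat,
    vcDim_add_le ⟨univ, isDegBall_univ, subset_univ _⟩ fun σ hσ => ?_⟩
  obtain ⟨r, hr0, hr⟩ := (σ : Set (Fin (d - 1) → ℝ)).toFinite.isBounded.subset_closedBall_lt 0 0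
  have hL : 0 < 2 * r := by positivity
  have hshat := shatters_Cd_padLast_union hd0 hL (by simpa using hr) hσ
  calc (σ.card : ℕ∞) + 2
      = (σ.image (fun a => padLast a 0) ∪ {padLast 0 (2 * r), padLast 0 (-(2 * r))}).card := by
        rw [card_image_padLast_union_pair hd0 hL.ne']
        push_cast
        rfl
    _ ≤ vcDim (Cd d) := card_le_vcDim (by push_cast; exact hshat)
end

section
/- For every integer d ≥ 2, the Vapnik–Chervonenkis dimension of the family 𝓓_{d-1}^0 of closed degenerate balls in ℓ∞^{d-1} containing the origin is at least VC-dim(𝓒_d) − 2, where 𝓒_d is the family of closed balls in ℓ∞^d. -/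
open Set Metric

lemma mem_cball_iff {n : ℕ} {x p : Fin n → ℝ} {r : ℝ} (hr : 0 ≤ r) :
    p ∈ Metric.closedBall x r ↔ ∀ i, |p i - x i| ≤ r := by
  simp [Metric.mem_closedBall, dist_pi_le_iff hr, Real.dist_eq]

lemma key (e : ℕ) (σ : Finset (Fin (e+1) → ℝ)) (hσ : Shatters (Cd (e+1)) ↑σ) :
    (σ.card : ℕ∞) - 2 ≤ vcDim (Dd0 e) := by
  classical
  by_cases hcard : σ.card ≤ 2
  · have h2 : (σ.card : ℕ∞) ≤ 2 := by exact_mod_cast hcard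
    simp [tsub_eq_zero_of_le h2]
  push_neg at hcard
  have h1card : 1 < σ.card := by omega
  obtain ⟨a, ha, b, hb, hab⟩ := Finset.one_lt_card.mp h1card
  -- pick a maximizing pair and coordinate
  obtain ⟨⟨v, u, j⟩, htmem, hmax⟩ :=
    Finset.exists_max_image (σ ×ˢ σ ×ˢ (Finset.univ : Finset (Fin (e+1))))
      (fun t => t.2.1 t.2.2 - t.1 t.2.2) ⟨(a, a, 0), by simp [ha]⟩
  simp only [Finset.mem_product] at htmem
  obtain ⟨hv, hu, -⟩ := htmem
  have hmax' : ∀ p ∈ σ, ∀ q ∈ σ, ∀ i, q i - p i ≤ u j - v j := by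
    intro p hp q hq i
    exact hmax (p, q, i) (by simp [hp, hq, Finset.mem_product])
  have hDpos : 0 < u j - v j := by
    obtain ⟨i, hi⟩ := Function.ne_iff.mp hab
    rcases lt_or_gt_of_ne hi with h | h
    · have := hmax' a ha b hb i; linarith
    · have := hmax' b hb a ha i; linarith
  have hrange : ∀ p ∈ σ, v j ≤ p j ∧ p j ≤ u j := by
    intro p hp
    constructor
    · have := hmax' p hp u hu j; linarith
    · have := hmax' v hv p hp j; linarith
  have huv : u ≠ v := fun h => by rw [h] at hDpos; linarith
  set σ' : Finset (Fin (e+1) → ℝ) := (σ.erase u).erase v with hσ'def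
  have hσ'sub : σ' ⊆ σ := (Finset.erase_subset _ _).trans (Finset.erase_subset _ _)
  have hσ'u : ∀ p ∈ σ', p ≠ u := fun p hp =>
    (Finset.mem_erase.mp (Finset.mem_of_mem_erase hp)).1
  have hσ'v : ∀ p ∈ σ', p ≠ v := fun p hp => (Finset.mem_erase.mp hp).1
  set φ : (Fin (e+1) → ℝ) → (Fin e → ℝ) :=
    fun p i => p (j.succAbove i) - u (j.succAbove i) with hφdef
  -- key geometric fact: for balls containing u and v, coordinate j is automatic
  have hB : ∀ (x : Fin (e+1) → ℝ) (r : ℝ), 0 ≤ r → u ∈ Metric.closedBall x r →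
      v ∈ Metric.closedBall x r → ∀ p ∈ σ,
      (∀ i : Fin e, |p (j.succAbove i) - x (j.succAbove i)| ≤ r) →
      p ∈ Metric.closedBall x r := by
    intro x r hr hux hvx p hp hpi
    rw [mem_cball_iff hr] at hux hvx ⊢
    intro i'
    rcases eq_or_ne i' j with rfl | hne
    · have h1 := abs_le.mp (hux i')
      have h2 := abs_le.mp (hvx i')
      have h3 := (hrange p hp).1
      have h4 := (hrange p hp).2
      rw [abs_le]
      constructor <;> linarith
    · obtain ⟨i, rfl⟩ := Fin.exists_succAbove_eq hne
      exact hpi i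
  -- φ is injective on σ'
  have hinj : Set.InjOn φ ↑σ' := by
    intro p hp q hq hpq
    by_contra hne
    have hp' : p ∈ σ' := hp
    have hq' : q ∈ σ' := hq
    have hpσ : p ∈ σ := hσ'sub hp'
    have hqσ : q ∈ σ := hσ'sub hq'
    have hTsub : ({u, v, p} : Set (Fin (e+1) → ℝ)) ⊆ ↑σ := by
      rintro y (rfl | rfl | rfl) <;> simpa
    obtain ⟨C, ⟨x, r, hr, rfl⟩, hCT⟩ := hσ _ hTsub
    have hu' : u ∈ Metric.closedBall x r := by
      have : u ∈ Metric.closedBall x r ∩ ↑σ := hCT.symm.subset (by simp)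
      exact this.1
    have hv' : v ∈ Metric.closedBall x r := by
      have : v ∈ Metric.closedBall x r ∩ ↑σ := hCT.symm.subset (by simp)
      exact this.1
    have hp'' : p ∈ Metric.closedBall x r := by
      have : p ∈ Metric.closedBall x r ∩ ↑σ := hCT.symm.subset (by simp)
      exact this.1
    have hqC : q ∈ Metric.closedBall x r := by
      refine hB x r hr hu' hv' q hqσ (fun i => ?_)
      have heq : p (j.succAbove i) = q (j.succAbove i) := by
        have := congrFun hpq i
        simp only [hφdef] at this
        linarith
      rw [← heq]
      exact (mem_cball_iff hr).mp hp'' (j.succAbove i)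
    have hqT : q ∈ ({u, v, p} : Set (Fin (e+1) → ℝ)) := hCT ▸ ⟨hqC, by simpa⟩
    simp only [Set.mem_insert_iff, Set.mem_singleton_iff] at hqT
    rcases hqT with h | h | h
    · exact hσ'u q hq' h
    · exact hσ'v q hq' h
    · exact hne h.symm
  have hvmem : v ∈ σ.erase u := Finset.mem_erase.mpr ⟨fun h => huv h.symm, hv⟩
  set σ'' : Finset (Fin e → ℝ) := σ'.image φ with hσ''def
  have hcard'' : σ''.card = σ.card - 2 := by
    rw [hσ''def, Finset.card_image_of_injOn hinj, hσ'def,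
      Finset.card_erase_of_mem hvmem, Finset.card_erase_of_mem hu]
    omega
  -- σ'' is shattered by degenerate balls containing 0
  have hshat : Shatters (Dd0 e) ↑σ'' := by
    intro S hSsub
    have hTsub : (({u, v} : Set (Fin (e+1) → ℝ)) ∪ (↑σ' ∩ φ ⁻¹' S)) ⊆ ↑σ := by
      rintro y (hy | hy)
      · rcases hy with rfl | rfl <;> simpa
      · exact hσ'sub hy.1
    obtain ⟨C, ⟨x, r, hr, rfl⟩, hCT⟩ := hσ _ hTsub
    have hu' : u ∈ Metric.closedBall x r := by
      have : u ∈ Metric.closedBall x r ∩ ↑σ := hCT.symm.subset (Or.inl (by simp))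
      exact this.1
    have hv' : v ∈ Metric.closedBall x r := by
      have : v ∈ Metric.closedBall x r ∩ ↑σ := hCT.symm.subset (Or.inl (by simp))
      exact this.1
    have h2r : u j - v j ≤ 2 * r := by
      have h1 := abs_le.mp ((mem_cball_iff hr).mp hu' j)
      have h2 := abs_le.mp ((mem_cball_iff hr).mp hv' j)
      linarith
    set I : Fin e → Set ℝ := fun i =>
      if ∀ p ∈ σ', x (j.succAbove i) - r ≤ p (j.succAbove i)
      then Set.Iic (x (j.succAbove i) + r - u (j.succAbove i))
      else Set.Ici (x (j.succAbove i) - r - u (j.succAbove i)) with hIdef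
    have hIub : ∀ i, ¬(∀ p ∈ σ', x (j.succAbove i) - r ≤ p (j.succAbove i)) →
        ∀ p ∈ σ', p (j.succAbove i) ≤ x (j.succAbove i) + r := by
      intro i h p hp
      push_neg at h
      obtain ⟨q, hq, hqlt⟩ := h
      have := hmax' q (hσ'sub hq) p (hσ'sub hp) (j.succAbove i)
      linarith
    set Cb : Set (Fin e → ℝ) := {y | ∀ i, y i ∈ I i} with hCbdef
    have hCbmem : Cb ∈ Dd0 e := by
      refine ⟨⟨I, fun i => ?_, rfl⟩, ?_⟩
      · rw [hIdef]; dsimp only; split_ifs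
        · exact Or.inl ⟨_, rfl⟩
        · exact Or.inr (Or.inl ⟨_, rfl⟩)
      · rw [Set.singleton_subset_iff]
        intro i
        have h1 := abs_le.mp ((mem_cball_iff hr).mp hu' (j.succAbove i))
        rw [hIdef]; dsimp only; split_ifs
        · simp only [Pi.zero_apply, Set.mem_Iic]; linarith
        · simp only [Pi.zero_apply, Set.mem_Ici]; linarith
    have hmem : ∀ p ∈ σ', (φ p ∈ Cb ↔ p ∈ Metric.closedBall x r) := by
      intro p hp
      constructor
      · intro hφp
        refine hB x r hr hu' hv' p (hσ'sub hp) (fun i => ?_)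
        have hi := hφp i
        rw [hIdef] at hi; dsimp only at hi
        rw [abs_le]
        split_ifs at hi with h
        · rw [Set.mem_Iic] at hi
          have hlow := h p hp
          simp only [hφdef] at hi
          constructor <;> linarith
        · rw [Set.mem_Ici] at hi
          have hup := hIub i h p hp
          simp only [hφdef] at hi
          constructor <;> linarith
      · intro hpC i
        have h1 := abs_le.mp ((mem_cball_iff hr).mp hpC (j.succAbove i))
        rw [hIdef]; dsimp only; split_ifs
        · rw [Set.mem_Iic]; simp only [hφdef]; linarith
        · rw [Set.mem_Ici]; simp only [hφdef]; linarith
    refine ⟨Cb, hCbmem, ?_⟩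
    ext y
    constructor
    · rintro ⟨hyC, hyσ''⟩
      obtain ⟨p, hp, rfl⟩ := Finset.mem_image.mp hyσ''
      have hpC : p ∈ Metric.closedBall x r := (hmem p hp).mp hyC
      have hpT : p ∈ (({u, v} : Set (Fin (e+1) → ℝ)) ∪ (↑σ' ∩ φ ⁻¹' S)) :=
        hCT ▸ ⟨hpC, by simpa using hσ'sub hp⟩
      rcases hpT with (rfl | rfl) | h
      · exact absurd rfl (hσ'u _ hp)
      · exact absurd rfl (hσ'v _ hp)
      · exact h.2
    · intro hyS
      have hyσ'' : y ∈ ↑σ'' := hSsub hyS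
      obtain ⟨p, hp, rfl⟩ := Finset.mem_image.mp hyσ''
      have hpT : p ∈ (({u, v} : Set (Fin (e+1) → ℝ)) ∪ (↑σ' ∩ φ ⁻¹' S)) :=
        Or.inr ⟨hp, hyS⟩
      have hpC : p ∈ Metric.closedBall x r ∩ ↑σ := hCT.symm.subset hpT
      exact ⟨(hmem p hp).mpr hpC.1, hyσ''⟩
  have hle : ((σ.card - 2 : ℕ) : ℕ∞) ≤ vcDim (Dd0 e) := by
    rw [← hcard'', vcDim]
    exact le_iSup₂ (f := fun (τ : Finset (Fin e → ℝ)) (_ : Shatters (Dd0 e) ↑τ) =>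
      (τ.card : ℕ∞)) σ'' hshat
  calc (σ.card : ℕ∞) - 2 = ((σ.card - 2 : ℕ) : ℕ∞) := by
        norm_cast
    _ ≤ vcDim (Dd0 e) := hle

/-- For every `d ≥ 2`, the VC dimension of the closed degenerate balls of `ℓ∞^{d-1}`
containing the origin is at least `vcDim (Cd d) - 2`. -/
theorem vcDim_Dd0_ge_vcDim_Cd_sub_two (d : ℕ) (hd : 2 ≤ d) :
    vcDim (Cd d) - 2 ≤ vcDim (Dd0 (d - 1)) := by
  obtain ⟨e, rfl⟩ : ∃ e, d = e + 1 := ⟨d - 1, by omega⟩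
  rw [tsub_le_iff_right, vcDim]
  exact iSup₂_le fun τ hτ => tsub_le_iff_right.mp (key e τ hτ)
end
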